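/- Let A, B, C, D be real matrices of sizes n×n, n×m, p×n, p×m respectively, and assume that A has no purely imaginary eigenvalue, i.e., for every ω ∈ ℝ, iω is not in the complex spectrum of A. For ω ∈ ℝ let G(iω) := Cℂ (iω • 1_n − Aℂ)⁻¹ Bℂ + Dℂ (subscript ℂ denoting entrywise coercion to ℂ), and assume the set {‖G(iω)‖ : ω ∈ ℝ} is bounded above. Let γ > 0, set R := γ² • 1_m − Dᵀ D, and define the real 2n × 2n block matrix H_γ := [[A + B R⁻¹ Dᵀ C, B R⁻¹ Bᵀ], [−Cᵀ (1_p + D R⁻¹ Dᵀ) C, −(A + B R⁻¹ Dᵀ C)ᵀ]]. Then sup_{ω ∈ ℝ} ‖G(iω)‖ < γ if and only if ‖D‖ < γ and H_γ has no purely imaginary eigenvalue, i.e., for every ω ∈ ℝ, iω is not in the complex spectrum of H_γ. -/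

import Mathlib

/-!
Write `G(s) = C (s - A)⁻¹ B + D`. With the input `u = R⁻¹ (Dᵀ C x + Bᵀ y)`, the equation
`H_γ (x, y) = s (x, y)` splits into the state equation `s x = A x + B u`, the costate equation
`s y = -Aᵀ y - Cᵀ (C x + D u)` and `γ² u = Dᵀ (C x + D u) + Bᵀ y`. If neither `s` nor `-s` is an
eigenvalue of `A`, the first two determine `x` and `y` from `u`, and the third becomes
`G(-s)ᵀ G(s) u = γ² u`; for real data `G(-iω)ᵀ = G(iω)ᴴ`. So, once `‖D‖ < γ` makes `R` invertible,
`iω` is an eigenvalue of `H_γ` iff `γ²` is an eigenvalue of `G(iω)ᴴ G(iω)`, which forces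
`γ ≤ ‖G(iω)‖` and happens whenever `‖G(iω)‖ = γ`. Finally `ω ↦ ‖G(iω)‖` is continuous and tends to
`‖D‖` at infinity, so its supremum is below `γ` iff `‖D‖ < γ` and it never takes the value `γ`.
-/

open Matrix
open scoped Matrix.Norms.L2Operator

open Filter Topology

theorem Matrix.mem_spectrum_iff_exists_mulVec_eq_smul {K n : Type*} [Field K] [Fintype n]
    [DecidableEq n] (M : Matrix n n K) (z : K) :
    z ∈ spectrum K M ↔ ∃ v ≠ 0, M *ᵥ v = z • v := by
  rw [← spectrum_toLin', ← Module.End.hasEigenvalue_iff_mem_spectrum]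
  constructor
  · intro h
    obtain ⟨v, hv⟩ := h.exists_hasEigenvector
    exact ⟨v, hv.2, Module.End.mem_eigenspace_iff.1 hv.1⟩
  · rintro ⟨v, hv0, hv⟩
    exact Module.End.hasEigenvalue_of_hasEigenvector ⟨Module.End.mem_eigenspace_iff.2 hv, hv0⟩

theorem Matrix.eq_nonsing_inv_mulVec_iff {K n : Type*} [Field K] [Fintype n] [DecidableEq n]
    {M : Matrix n n K} (hM : IsUnit M) {u v : n → K} : u = M⁻¹ *ᵥ v ↔ M *ᵥ u = v := by
  have hdet := (isUnit_iff_isUnit_det M).1 hM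
  constructor
  · rintro rfl
    rw [mulVec_mulVec, mul_nonsing_inv _ hdet, one_mulVec]
  · rintro rfl
    rw [mulVec_mulVec, nonsing_inv_mul _ hdet, one_mulVec]

theorem Matrix.map_nonsing_inv {K L n : Type*} [Field K] [Field L] [Fintype n] [DecidableEq n]
    (f : K →+* L) (M : Matrix n n K) : M⁻¹.map f = (M.map f)⁻¹ := by
  have hdet : (M.map f).det = f M.det := (f.map_det M).symm
  have hadj : (M.map f).adjugate = M.adjugate.map f := (f.map_adjugate M).symm
  rw [inv_def, inv_def, hdet, hadj, Ring.inverse_eq_inv', Ring.inverse_eq_inv', ← map_inv₀]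
  ext i j
  simp

theorem Matrix.norm_le_sq_of_mem_spectrum_conjTranspose_mul_self {𝕜 m p : Type*} [RCLike 𝕜]
    [Fintype m] [Fintype p] [DecidableEq m] (G : Matrix p m 𝕜) {z : 𝕜}
    (hz : z ∈ spectrum 𝕜 (Gᴴ * G)) : ‖z‖ ≤ ‖G‖ ^ 2 := by
  cases isEmpty_or_nonempty m
  · simp [spectrum.of_subsingleton] at hz
  · simpa [sq, l2_opNorm_conjTranspose_mul_self] using spectrum.norm_le_norm_of_mem hz

open scoped MatrixOrder ComplexOrder in
theorem Matrix.sq_norm_mem_spectrum_conjTranspose_mul_self {m p : Type*} [Fintype m]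
    [Fintype p] [DecidableEq m] {G : Matrix p m ℂ} (hG : G ≠ 0) :
    ((‖G‖ ^ 2 : ℝ) : ℂ) ∈ spectrum ℂ (Gᴴ * G) := by
  cases isEmpty_or_nonempty m
  · exact absurd (Subsingleton.elim G 0) hG
  · have h := CStarAlgebra.norm_mem_spectrum_of_nonneg
      (posSemidef_conjTranspose_mul_self G).nonneg
    rw [l2_opNorm_conjTranspose_mul_self, ← sq] at h
    exact spectrum.algebraMap_mem ℂ h

theorem Matrix.isUnit_smul_one_sub_transpose_mul_self {m p : Type*} [Fintype m] [Fintype p]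
    [DecidableEq m] (D : Matrix p m ℝ) {r : ℝ} (h : ‖D‖ ^ 2 < r) :
    IsUnit (r • 1 - Dᵀ * D) := by
  have hr : r ∉ spectrum ℝ (Dᴴ * D) := fun hr =>
    (h.trans_le (le_abs_self r)).not_ge (D.norm_le_sq_of_mem_spectrum_conjTranspose_mul_self hr)
  rwa [spectrum.notMem_iff, Algebra.algebraMap_eq_smul_one, conjTranspose_eq_transpose_of_trivial]
    at hr

section

open WithLp

theorem EuclideanSpace.sq_norm_eq_re_add_im {ι : Type*} [Fintype ι] (v : ι → ℂ) :
    ‖toLp 2 v‖ ^ 2 = ‖toLp 2 (fun i => (v i).re)‖ ^ 2 + ‖toLp 2 (fun i => (v i).im)‖ ^ 2 := by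
  simp only [EuclideanSpace.norm_sq_eq, ← Finset.sum_add_distrib, Complex.sq_norm,
    Complex.normSq_apply, Real.norm_eq_abs, sq_abs]
  simp [sq]

theorem EuclideanSpace.norm_ofReal {ι : Type*} [Fintype ι] (v : ι → ℝ) :
    ‖toLp 2 (fun i => (v i : ℂ))‖ = ‖toLp 2 v‖ := by
  simp [EuclideanSpace.norm_eq]

theorem Matrix.l2_opNorm_map_ofReal {m n : Type*} [Fintype m] [Fintype n] [DecidableEq n]
    (M : Matrix m n ℝ) : ‖M.map (algebraMap ℝ ℂ)‖ = ‖M‖ := by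
  set Mc := M.map (algebraMap ℝ ℂ)
  apply le_antisymm
  · refine ContinuousLinearMap.opNorm_le_bound _ (norm_nonneg M) fun x => ?_
    refine (sq_le_sq₀ (norm_nonneg _) (by positivity)).1 ?_
    have hre : (fun i => ((Mc *ᵥ ofLp x) i).re) = M *ᵥ (fun j => (x j).re) := by
      ext i; simp [Mc, mulVec, dotProduct, Complex.re_sum]
    have him : (fun i => ((Mc *ᵥ ofLp x) i).im) = M *ᵥ (fun j => (x j).im) := by
      ext i; simp [Mc, mulVec, dotProduct, Complex.im_sum]
    calc ‖toLp 2 (Mc *ᵥ ofLp x)‖ ^ 2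
        = ‖toLp 2 (M *ᵥ (fun j => (x j).re))‖ ^ 2 + ‖toLp 2 (M *ᵥ (fun j => (x j).im))‖ ^ 2 := by
          rw [EuclideanSpace.sq_norm_eq_re_add_im, hre, him]
      _ ≤ (‖M‖ * ‖toLp 2 (fun j => (x j).re)‖) ^ 2 + (‖M‖ * ‖toLp 2 (fun j => (x j).im)‖) ^ 2 := by
          gcongr <;> exact M.l2_opNorm_mulVec (toLp 2 _)
      _ = (‖M‖ * ‖x‖) ^ 2 := by
          rw [mul_pow, mul_pow, ← mul_add, ← EuclideanSpace.sq_norm_eq_re_add_im (ofLp x),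
            toLp_ofLp, mul_pow]
  · refine ContinuousLinearMap.opNorm_le_bound _ (norm_nonneg _) fun x => ?_
    have hmul : Mc *ᵥ (fun j => (x j : ℂ)) = fun i => ((M *ᵥ ofLp x) i : ℂ) := by
      ext i; simp [Mc, mulVec, dotProduct]
    calc ‖toLp 2 (M *ᵥ ofLp x)‖ = ‖toLp 2 (Mc *ᵥ (fun j => (x j : ℂ)))‖ := by
          rw [hmul, EuclideanSpace.norm_ofReal]
      _ ≤ ‖Mc‖ * ‖toLp 2 (fun j => (x j : ℂ))‖ := Mc.l2_opNorm_mulVec (toLp 2 _)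
      _ = ‖Mc‖ * ‖x‖ := by rw [EuclideanSpace.norm_ofReal, toLp_ofLp]

end

theorem Continuous.iSup_lt_of_tendsto_cocompact {X : Type*} [TopologicalSpace X]
    [PreconnectedSpace X] [NoncompactSpace X] {f : X → ℝ} (hf : Continuous f) {L γ : ℝ}
    (hlim : Tendsto f (cocompact X) (𝓝 L)) (hL : L < γ) (hγ : ∀ x, f x ≠ γ) :
    ⨆ x, f x < γ := by
  obtain ⟨x₀, hx₀⟩ := (hlim.eventually_lt_const hL).exists
  have hlt : ∀ x, f x < γ := fun x => lt_of_not_ge fun hx =>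
    have ⟨z, hz⟩ := intermediate_value_univ x₀ x hf ⟨hx₀.le, hx⟩
    hγ z hz
  -- `max f γ'` is constant near infinity, so it attains its maximum.
  obtain ⟨γ', hLγ', hγ'γ⟩ := exists_between hL
  have hev : ∀ᶠ x in cocompact X, max (f x) γ' ≤ max (f x₀) γ' := by
    filter_upwards [hlim.eventually_lt_const hLγ'] with x hx
    exact (max_eq_right hx.le).trans_le (le_max_right _ _)
  obtain ⟨xm, hxm⟩ := (hf.max continuous_const).exists_forall_ge' x₀ hev
  have : Nonempty X := ⟨x₀⟩
  calc ⨆ x, f x ≤ max (f xm) γ' := ciSup_le fun x => (le_max_left _ _).trans (hxm x)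
    _ < γ := max_lt (hlt xm) hγ'γ

theorem tendsto_ofReal_mul_I_cocompact :
    Tendsto (fun ω : ℝ => (ω : ℂ) * Complex.I) (cocompact ℝ) (Bornology.cobounded ℂ) := by
  rw [← tendsto_norm_atTop_iff_cobounded]
  simp only [norm_mul, Complex.norm_I, mul_one, Complex.norm_real]
  exact tendsto_norm_cocompact_atTop

section StateSpace

variable {K : Type*} [Field K] {n m p : Type*}

noncomputable def transferMatrix [Fintype n] [DecidableEq n] (A : Matrix n n K)
    (B : Matrix n m K) (C : Matrix p n K) (D : Matrix p m K) (s : K) : Matrix p m K :=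
  C * (s • (1 : Matrix n n K) - A)⁻¹ * B + D

noncomputable def hamiltonian [Fintype m] [Fintype p] [DecidableEq m] [DecidableEq p]
    (A : Matrix n n K) (B : Matrix n m K) (C : Matrix p n K) (D : Matrix p m K)
    (R : Matrix m m K) : Matrix (n ⊕ n) (n ⊕ n) K :=
  fromBlocks (A + B * R⁻¹ * Dᵀ * C) (B * R⁻¹ * Bᵀ)
    (-(Cᵀ * ((1 : Matrix p p K) + D * R⁻¹ * Dᵀ) * C)) (-(A + B * R⁻¹ * Dᵀ * C)ᵀ)

def IsHamiltonianSolution [Fintype n] [Fintype m] [Fintype p] (A : Matrix n n K)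
    (B : Matrix n m K) (C : Matrix p n K) (D : Matrix p m K) (γ2 s : K) (x y : n → K)
    (u : m → K) : Prop :=
  A *ᵥ x + B *ᵥ u = s • x ∧
  -(Cᵀ *ᵥ (C *ᵥ x + D *ᵥ u)) - Aᵀ *ᵥ y = s • y ∧
  Dᵀ *ᵥ (C *ᵥ x + D *ᵥ u) + Bᵀ *ᵥ y = γ2 • u

variable {A : Matrix n n K} {B : Matrix n m K} {C : Matrix p n K} {D : Matrix p m K}
  {R : Matrix m m K} {γ2 s : K}

theorem hamiltonian_mulVec [Fintype n] [Fintype m] [Fintype p] [DecidableEq m] [DecidableEq p]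
    (hR : Rᵀ = R) {x y : n → K} {u : m → K}
    (hu : u = R⁻¹ *ᵥ (Dᵀ *ᵥ (C *ᵥ x) + Bᵀ *ᵥ y)) :
    hamiltonian A B C D R *ᵥ (x ⊕ᵥ y) =
      (A *ᵥ x + B *ᵥ u) ⊕ᵥ (-(Cᵀ *ᵥ (C *ᵥ x + D *ᵥ u)) - Aᵀ *ᵥ y) := by
  have hRinv : (R⁻¹)ᵀ = R⁻¹ := by rw [transpose_nonsing_inv, hR]
  simp only [hamiltonian, fromBlocks_mulVec, Sum.elim_comp_inl, Sum.elim_comp_inr, hu]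
  congr 1
  · simp only [add_mulVec, mulVec_add, mulVec_mulVec, Matrix.mul_assoc]
    abel
  · simp only [neg_mulVec, add_mulVec, mulVec_add, mulVec_mulVec, Matrix.mul_assoc,
      transpose_add, transpose_mul, hRinv, transpose_transpose, Matrix.mul_add, Matrix.add_mul,
      Matrix.mul_one]
    abel

theorem input_equation_iff [Fintype n] [Fintype m] [Fintype p] [DecidableEq m]
    (hR : R = γ2 • 1 - Dᵀ * D) (hRu : IsUnit R) {x y : n → K} {u : m → K} :
    Dᵀ *ᵥ (C *ᵥ x + D *ᵥ u) + Bᵀ *ᵥ y = γ2 • u ↔ u = R⁻¹ *ᵥ (Dᵀ *ᵥ (C *ᵥ x) + Bᵀ *ᵥ y) := by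
  rw [eq_nonsing_inv_mulVec_iff hRu, hR, sub_mulVec, smul_mulVec, one_mulVec, ← mulVec_mulVec,
    mulVec_add, sub_eq_iff_eq_add, eq_comm, add_right_comm]

theorem hamiltonian_mulVec_eq_smul_iff [Fintype n] [Fintype m] [Fintype p] [DecidableEq m]
    [DecidableEq p] (hR : R = γ2 • 1 - Dᵀ * D) (hRu : IsUnit R) (x y : n → K) :
    hamiltonian A B C D R *ᵥ (x ⊕ᵥ y) = s • (x ⊕ᵥ y) ↔
      ∃ u, IsHamiltonianSolution A B C D γ2 s x y u := by
  have hRt : Rᵀ = R := by simp [hR, transpose_sub, transpose_mul]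
  have hsmul : s • (x ⊕ᵥ y) = s • x ⊕ᵥ s • y := by ext (i | i) <;> rfl
  rw [hamiltonian_mulVec hRt rfl, hsmul, Sum.elim_eq_iff]
  constructor
  · rintro ⟨hx, hy⟩
    exact ⟨_, hx, hy, (input_equation_iff hR hRu).2 rfl⟩
  · rintro ⟨u, hx, hy, hu⟩
    rw [← (input_equation_iff hR hRu).1 hu]
    exact ⟨hx, hy⟩

theorem transferMatrix_mulVec [Fintype n] [Fintype m] [DecidableEq n] (s : K) (u : m → K) :
    transferMatrix A B C D s *ᵥ u = C *ᵥ ((s • 1 - A)⁻¹ *ᵥ (B *ᵥ u)) + D *ᵥ u := by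
  simp only [transferMatrix, add_mulVec, mulVec_mulVec, Matrix.mul_assoc]

theorem transpose_transferMatrix_mulVec [Fintype n] [Fintype p] [DecidableEq n] (s : K)
    (w : p → K) :
    (transferMatrix A B C D s)ᵀ *ᵥ w = Dᵀ *ᵥ w + Bᵀ *ᵥ ((s • 1 - A)ᵀ⁻¹ *ᵥ (Cᵀ *ᵥ w)) := by
  simp only [transferMatrix, transpose_add, transpose_mul, transpose_nonsing_inv, add_mulVec,
    mulVec_mulVec, Matrix.mul_assoc]
  abel

theorem isHamiltonianSolution_iff [Fintype n] [Fintype m] [Fintype p] [DecidableEq n]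
    (hs : IsUnit (s • 1 - A)) (hs' : IsUnit ((-s) • 1 - A)) {x y : n → K} {u : m → K} :
    IsHamiltonianSolution A B C D γ2 s x y u ↔
      x = (s • 1 - A)⁻¹ *ᵥ (B *ᵥ u) ∧
      y = ((-s) • 1 - A)ᵀ⁻¹ *ᵥ (Cᵀ *ᵥ (transferMatrix A B C D s *ᵥ u)) ∧
      ((transferMatrix A B C D (-s))ᵀ * transferMatrix A B C D s) *ᵥ u = γ2 • u := by
  have hstate : A *ᵥ x + B *ᵥ u = s • x ↔ x = (s • 1 - A)⁻¹ *ᵥ (B *ᵥ u) := by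
    rw [eq_nonsing_inv_mulVec_iff hs, sub_mulVec, smul_mulVec, one_mulVec, sub_eq_iff_eq_add,
      eq_comm, add_comm]
  have hcostate : ∀ w, -(Cᵀ *ᵥ w) - Aᵀ *ᵥ y = s • y ↔
      y = ((-s) • 1 - A)ᵀ⁻¹ *ᵥ (Cᵀ *ᵥ w) := by
    intro w
    rw [eq_nonsing_inv_mulVec_iff ((isUnit_transpose _).2 hs'), transpose_sub, transpose_smul,
      transpose_one, sub_mulVec, smul_mulVec, one_mulVec, neg_smul]
    constructor <;> intro h <;> rw [← h] <;> abel
  rw [IsHamiltonianSolution, hstate]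
  constructor
  · rintro ⟨rfl, hy, hu⟩
    rw [← transferMatrix_mulVec] at hy hu
    have hy' := (hcostate _).1 hy
    refine ⟨rfl, hy', ?_⟩
    rw [← mulVec_mulVec, transpose_transferMatrix_mulVec, ← hy', hu]
  · rintro ⟨rfl, rfl, hu⟩
    rw [← transferMatrix_mulVec]
    refine ⟨rfl, (hcostate _).2 rfl, ?_⟩
    rw [← hu, ← mulVec_mulVec, transpose_transferMatrix_mulVec]

theorem mem_spectrum_hamiltonian_iff [Fintype n] [Fintype m] [Fintype p] [DecidableEq n]
    [DecidableEq m] [DecidableEq p] (hR : R = γ2 • 1 - Dᵀ * D) (hRu : IsUnit R)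
    (hs : s ∉ spectrum K A) (hs' : -s ∉ spectrum K A) :
    s ∈ spectrum K (hamiltonian A B C D R) ↔
      γ2 ∈ spectrum K ((transferMatrix A B C D (-s))ᵀ * transferMatrix A B C D s) := by
  rw [spectrum.notMem_iff, Algebra.algebraMap_eq_smul_one] at hs hs'
  simp only [mem_spectrum_iff_exists_mulVec_eq_smul]
  constructor
  · rintro ⟨z, hz, hHz⟩
    rw [← Sum.elim_comp_inl_inr z, hamiltonian_mulVec_eq_smul_iff hR hRu] at hHz
    obtain ⟨u, hsol⟩ := hHz
    obtain ⟨hx, hy, hu⟩ := (isHamiltonianSolution_iff hs hs').1 hsol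
    refine ⟨u, ?_, hu⟩
    rintro rfl
    apply hz
    rw [← Sum.elim_comp_inl_inr z, hx, hy]
    simp
  · rintro ⟨u, hu0, hu⟩
    have hsol := (isHamiltonianSolution_iff (x := _) (y := _) hs hs').2 ⟨rfl, rfl, hu⟩
    refine ⟨_, ?_, (hamiltonian_mulVec_eq_smul_iff hR hRu _ _).2 ⟨u, hsol⟩⟩
    intro h0
    rw [← Sum.elim_zero_zero, Sum.elim_eq_iff] at h0
    apply hu0
    rw [(input_equation_iff hR hRu).1 hsol.2.2, h0.1, h0.2]
    simp

theorem transferMatrix_map {L : Type*} [Field L] [Fintype n] [DecidableEq n] (f : K →+* L)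
    (s : K) :
    (transferMatrix A B C D s).map f =
      transferMatrix (A.map f) (B.map f) (C.map f) (D.map f) (f s) := by
  simp only [transferMatrix, Matrix.map_add f (map_add f), Matrix.map_mul, map_nonsing_inv,
    Matrix.map_sub f (map_sub f), Matrix.map_smul' f s _ (map_mul f),
    Matrix.map_one f (map_zero f) (map_one f)]

theorem hamiltonian_map {L : Type*} [Field L] [Fintype m] [Fintype p] [DecidableEq m]
    [DecidableEq p] (f : K →+* L) :
    (hamiltonian A B C D R).map f =
      hamiltonian (A.map f) (B.map f) (C.map f) (D.map f) (R.map f) := by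
  simp only [hamiltonian, fromBlocks_map, Matrix.map_add f (map_add f), Matrix.map_mul,
    Matrix.map_neg f (map_neg f), map_nonsing_inv, transpose_map,
    Matrix.map_one f (map_zero f) (map_one f)]

theorem conjTranspose_transferMatrix_map_ofReal [Fintype n] [DecidableEq n] (A : Matrix n n ℝ)
    (B : Matrix n m ℝ) (C : Matrix p n ℝ) (D : Matrix p m ℝ) (z : ℂ) :
    (transferMatrix (A.map (algebraMap ℝ ℂ)) (B.map (algebraMap ℝ ℂ)) (C.map (algebraMap ℝ ℂ))
        (D.map (algebraMap ℝ ℂ)) z)ᴴ =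
      (transferMatrix (A.map (algebraMap ℝ ℂ)) (B.map (algebraMap ℝ ℂ))
        (C.map (algebraMap ℝ ℂ)) (D.map (algebraMap ℝ ℂ)) (starRingEnd ℂ z))ᵀ := by
  have hconj : ⇑(starRingEnd ℂ) ∘ ⇑(algebraMap ℝ ℂ) = algebraMap ℝ ℂ :=
    funext Complex.conj_ofReal
  change ((transferMatrix _ _ _ _ z).map (starRingEnd ℂ))ᵀ = _
  simp only [transferMatrix_map, Matrix.map_map, hconj]

theorem mem_spectrum_hamiltonian_map_ofReal_iff [Fintype n] [Fintype m] [Fintype p]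
    [DecidableEq n] [DecidableEq m] [DecidableEq p] {A : Matrix n n ℝ} {B : Matrix n m ℝ}
    {C : Matrix p n ℝ} {D : Matrix p m ℝ} {R : Matrix m m ℝ} {r : ℝ}
    (hR : R = r • 1 - Dᵀ * D) (hD : ‖D‖ ^ 2 < r)
    (hA : ∀ ω : ℝ, (ω : ℂ) * Complex.I ∉ spectrum ℂ (A.map (algebraMap ℝ ℂ))) (ω : ℝ) :
    (ω : ℂ) * Complex.I ∈ spectrum ℂ ((hamiltonian A B C D R).map (algebraMap ℝ ℂ)) ↔
      (r : ℂ) ∈ spectrum ℂ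
        ((transferMatrix (A.map (algebraMap ℝ ℂ)) (B.map (algebraMap ℝ ℂ))
          (C.map (algebraMap ℝ ℂ)) (D.map (algebraMap ℝ ℂ)) ((ω : ℂ) * Complex.I))ᴴ *
        transferMatrix (A.map (algebraMap ℝ ℂ)) (B.map (algebraMap ℝ ℂ))
          (C.map (algebraMap ℝ ℂ)) (D.map (algebraMap ℝ ℂ)) ((ω : ℂ) * Complex.I)) := by
  have hRu : IsUnit R := hR ▸ D.isUnit_smul_one_sub_transpose_mul_self hD
  have hRc : R.map (algebraMap ℝ ℂ) =
      algebraMap ℝ ℂ r • 1 - (D.map (algebraMap ℝ ℂ))ᵀ * D.map (algebraMap ℝ ℂ) := by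
    rw [hR, Matrix.map_sub _ (map_sub _), Matrix.map_smul' _ _ _ (map_mul _),
      Matrix.map_one _ (map_zero _) (map_one _), Matrix.map_mul, transpose_map]
  have hconj : starRingEnd ℂ ((ω : ℂ) * Complex.I) = -((ω : ℂ) * Complex.I) := by simp
  have hneg : -((ω : ℂ) * Complex.I) ∉ spectrum ℂ (A.map (algebraMap ℝ ℂ)) := by
    simpa using hA (-ω)
  rw [hamiltonian_map, mem_spectrum_hamiltonian_iff hRc (hRu.map (algebraMap ℝ ℂ).mapMatrix)
    (hA ω) hneg, conjTranspose_transferMatrix_map_ofReal, hconj]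
  rfl

theorem transferMatrix_eq_resolvent [Fintype n] [DecidableEq n] (A : Matrix n n K)
    (B : Matrix n m K) (C : Matrix p n K) (D : Matrix p m K) :
    transferMatrix A B C D = (fun M => C * M * B + D) ∘ resolvent A := by
  ext1 s
  rw [Function.comp_apply, transferMatrix, resolvent, Algebra.algebraMap_eq_smul_one,
    nonsing_inv_eq_ringInverse]

end StateSpace

section

variable {𝕜 : Type*} [RCLike 𝕜] {n m p : Type*} [Fintype n] [DecidableEq n]
  (A : Matrix n n 𝕜) (B : Matrix n m 𝕜) (C : Matrix p n 𝕜) (D : Matrix p m 𝕜)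

theorem continuousOn_transferMatrix :
    ContinuousOn (transferMatrix A B C D) (resolventSet 𝕜 A) := by
  have hres : ContinuousOn (resolvent A) (resolventSet 𝕜 A) := fun s hs =>
    (spectrum.hasDerivAt_resolvent_const_left hs).continuousAt.continuousWithinAt
  rw [transferMatrix_eq_resolvent]
  exact (by fun_prop : Continuous fun M : Matrix n n 𝕜 => C * M * B + D).comp_continuousOn hres

theorem tendsto_transferMatrix_cobounded :
    Tendsto (transferMatrix A B C D) (Bornology.cobounded 𝕜) (𝓝 D) := by
  rw [transferMatrix_eq_resolvent]
  simpa using ((by fun_prop : Continuous fun M : Matrix n n 𝕜 => C * M * B + D).tendsto 0).comp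
    (spectrum.resolvent_tendsto_cobounded A)

end

theorem stmt12_general (n m p : ℕ)
    (A : Matrix (Fin n) (Fin n) ℝ) (B : Matrix (Fin n) (Fin m) ℝ)
    (C : Matrix (Fin p) (Fin n) ℝ) (D : Matrix (Fin p) (Fin m) ℝ)
    (hA : ∀ ω : ℝ, ((ω : ℂ) * Complex.I) ∉ spectrum ℂ (A.map (algebraMap ℝ ℂ)))
    (Gc : ℝ → Matrix (Fin p) (Fin m) ℂ)
    (hGc : ∀ ω : ℝ, Gc ω =
        C.map (algebraMap ℝ ℂ) *
          (((ω : ℂ) * Complex.I) • (1 : Matrix (Fin n) (Fin n) ℂ) - A.map (algebraMap ℝ ℂ))⁻¹ *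
          B.map (algebraMap ℝ ℂ) + D.map (algebraMap ℝ ℂ))
    (hbdd : BddAbove (Set.range fun ω : ℝ => ‖Gc ω‖))
    (γ : ℝ)
    (R : Matrix (Fin m) (Fin m) ℝ)
    (hR : R = γ ^ 2 • (1 : Matrix (Fin m) (Fin m) ℝ) - Dᵀ * D)
    (Hγ : Matrix (Fin n ⊕ Fin n) (Fin n ⊕ Fin n) ℝ)
    (hH : Hγ = Matrix.fromBlocks
        (A + B * R⁻¹ * Dᵀ * C) (B * R⁻¹ * Bᵀ)
        (-(Cᵀ * ((1 : Matrix (Fin p) (Fin p) ℝ) + D * R⁻¹ * Dᵀ) * C))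
        (-(A + B * R⁻¹ * Dᵀ * C)ᵀ)) :
    (⨆ ω : ℝ, ‖Gc ω‖) < γ ↔
      ‖D‖ < γ ∧ ∀ ω : ℝ, ((ω : ℂ) * Complex.I) ∉ spectrum ℂ (Hγ.map (algebraMap ℝ ℂ)) := by
  have hG : Gc = fun ω : ℝ => transferMatrix (A.map (algebraMap ℝ ℂ)) (B.map (algebraMap ℝ ℂ))
      (C.map (algebraMap ℝ ℂ)) (D.map (algebraMap ℝ ℂ)) ((ω : ℂ) * Complex.I) := funext hGc
  have hcont : Continuous fun ω => ‖Gc ω‖ := by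
    rw [hG]
    exact ((continuousOn_transferMatrix _ _ _ _).comp_continuous (by fun_prop)
      fun ω => Set.notMem_compl_iff.1 (hA ω)).norm
  have hlim : Tendsto (fun ω => ‖Gc ω‖) (cocompact ℝ) (𝓝 ‖D‖) := by
    rw [hG, ← l2_opNorm_map_ofReal D]
    exact ((tendsto_transferMatrix_cobounded _ _ _ _).comp tendsto_ofReal_mul_I_cocompact).norm
  have hspec (hD : ‖D‖ < γ) (ω : ℝ) :
      (ω : ℂ) * Complex.I ∈ spectrum ℂ (Hγ.map (algebraMap ℝ ℂ)) ↔
        ((γ ^ 2 : ℝ) : ℂ) ∈ spectrum ℂ ((Gc ω)ᴴ * Gc ω) := by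
    rw [hH, congrFun hG ω]
    exact mem_spectrum_hamiltonian_map_ofReal_iff hR
      (pow_lt_pow_left₀ hD (norm_nonneg D) two_ne_zero) hA ω
  constructor
  · intro hsup
    have hD := (le_of_tendsto hlim (.of_forall fun ω => le_ciSup hbdd ω)).trans_lt hsup
    refine ⟨hD, fun ω hω => ?_⟩
    have h := (Gc ω).norm_le_sq_of_mem_spectrum_conjTranspose_mul_self ((hspec hD ω).1 hω)
    rw [Complex.norm_real, Real.norm_of_nonneg (sq_nonneg γ)] at h
    exact ((abs_le_of_sq_le_sq' h (norm_nonneg _)).2.trans (le_ciSup hbdd ω)).not_gt hsup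
  · rintro ⟨hD, hHγ⟩
    refine hcont.iSup_lt_of_tendsto_cocompact hlim hD fun ω hω => hHγ ω ((hspec hD ω).2 ?_)
    have hG0 : Gc ω ≠ 0 := fun h0 => by
      rw [h0, norm_zero] at hω
      exact (norm_nonneg D).not_gt (hω ▸ hD)
    simpa [hω] using sq_norm_mem_spectrum_conjTranspose_mul_self hG0

/-- Let `(A, B, C, D)` be a real state-space realization with `A` having no
purely imaginary eigenvalue, `G(iω) := Cℂ (iω • 1 − Aℂ)⁻¹ Bℂ + Dℂ`, with `{‖G(iω)‖}` bounded
above, and let `γ > 0`, `R := γ² • 1 − Dᵀ D`, and `H_γ` the associated Hamiltonian matrix.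
Then `sup_ω ‖G(iω)‖ < γ` iff `‖D‖ < γ` and `H_γ` has no purely imaginary eigenvalue. -/
theorem stmt12 (n m p : ℕ)
    (A : Matrix (Fin n) (Fin n) ℝ) (B : Matrix (Fin n) (Fin m) ℝ)
    (C : Matrix (Fin p) (Fin n) ℝ) (D : Matrix (Fin p) (Fin m) ℝ)
    (hA : ∀ ω : ℝ, ((ω : ℂ) * Complex.I) ∉ spectrum ℂ (A.map (algebraMap ℝ ℂ)))
    (Gc : ℝ → Matrix (Fin p) (Fin m) ℂ)
    (hGc : ∀ ω : ℝ, Gc ω =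
        C.map (algebraMap ℝ ℂ) *
          (((ω : ℂ) * Complex.I) • (1 : Matrix (Fin n) (Fin n) ℂ) - A.map (algebraMap ℝ ℂ))⁻¹ *
          B.map (algebraMap ℝ ℂ) + D.map (algebraMap ℝ ℂ))
    (hbdd : BddAbove (Set.range fun ω : ℝ => ‖Gc ω‖))
    (γ : ℝ) (hγ : 0 < γ)
    (R : Matrix (Fin m) (Fin m) ℝ)
    (hR : R = γ ^ 2 • (1 : Matrix (Fin m) (Fin m) ℝ) - Dᵀ * D)
    (Hγ : Matrix (Fin n ⊕ Fin n) (Fin n ⊕ Fin n) ℝ)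
    (hH : Hγ = Matrix.fromBlocks
        (A + B * R⁻¹ * Dᵀ * C) (B * R⁻¹ * Bᵀ)
        (-(Cᵀ * ((1 : Matrix (Fin p) (Fin p) ℝ) + D * R⁻¹ * Dᵀ) * C))
        (-(A + B * R⁻¹ * Dᵀ * C)ᵀ)) :
    (⨆ ω : ℝ, ‖Gc ω‖) < γ ↔
      ‖D‖ < γ ∧ ∀ ω : ℝ, ((ω : ℂ) * Complex.I) ∉ spectrum ℂ (Hγ.map (algebraMap ℝ ℂ)) :=
  stmt12_general n m p A B C D hA Gc hGc hbdd γ R hR Hγ hH
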